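/- Let Ω be a measurable space, π₀ a probability measure on Ω, and F : [0,1] × Ω → ℝ bounded measurable with ‖F(s, ·)‖_∞ ≤ C_ab for all s and sup_ω |F(r, ω) − F(s, ω)| ≤ L_ab |r − s| for all r, s ∈ [0,1]. Fix a positive integer N, set δ := 1/N and t_k := kδ, and define two sequences of probability measures by π_{t₀} = π̃_{t₀} = π₀, with π_{t_{k+1}} the Gibbs tilt of π_{t_k} by ∫_{t_k}^{t_{k+1}} F(r, ·) dr and π̃_{t_{k+1}} the Gibbs tilt of π̃_{t_k} by δ F(t_k, ·). Then with C₁ := (1/2) L_ab e^{L_ab}, C₂ := 4 C_ab e^{2 C_ab}, and C_global := (C₁/C₂)(e^{C₂} − 1), one has ‖π_{t_k} − π̃_{t_k}‖_TV ≤ C_global δ for all 0 ≤ k ≤ N. If moreover Ω is a compact metric space, then the Wasserstein-1 distance satisfies W₁(π_{t_k}, π̃_{t_k}) ≤ diam(Ω) · C_global δ for all k. -/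

import Mathlib

open MeasureTheory

/-- Total variation distance `(1/2) ∫ |dP/dλ − dQ/dλ| dλ` with the common
dominating measure `λ = P + Q`. -/
noncomputable def tvDist {Ω : Type*} [MeasurableSpace Ω]
    (P Q : Measure Ω) : ℝ :=
  (1 / 2) * ∫ ω, |(P.rnDeriv (P + Q) ω).toReal
    - (Q.rnDeriv (P + Q) ω).toReal| ∂(P + Q)

/-- The Gibbs tilt of `π` by `G`: the probability measure with density
`e^G / ∫ e^G dπ` with respect to `π`. -/
noncomputable def gibbsTilt {Ω : Type*} [MeasurableSpace Ω]
    (π : Measure Ω) (G : Ω → ℝ) : Measure Ω :=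
  π.withDensity fun ω =>
    ENNReal.ofReal (Real.exp (G ω) / ∫ ω', Real.exp (G ω') ∂π)

/-- Wasserstein-1 distance, defined as the infimum of `∫ d(x,y) dγ` over
couplings `γ` of `(P, Q)`. -/
noncomputable def W1 {Ω : Type*} [MeasurableSpace Ω] [PseudoMetricSpace Ω]
    (P Q : Measure Ω) : ℝ :=
  sInf { c | ∃ γ : Measure (Ω × Ω),
    γ.map Prod.fst = P ∧ γ.map Prod.snd = Q ∧ c = ∫ p, dist p.1 p.2 ∂γ }

open Set Metric

/-!
Tilting is additive in the potential, so both schemes are Gibbs tilts of `π₀` itself: after `k`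
steps by the exact integral `∫₀^{t_k} F` and by its left-endpoint Riemann sum. Each of the `k ≤ N`
Riemann steps errs by at most `L_ab δ² / 2`, so the two potentials are uniformly within
`ε = L_ab δ / 2`. Two tilts of one measure by potentials at sup-distance `ε` have normalised
densities within a factor `e^{2ε}` of each other, whence a TV distance at most
`(e^{2ε} - 1) / 2 ≤ C₁ δ ≤ C_global δ`, the last step because `e^c - 1 ≥ c`. A coupling that
keeps the common mass on the diagonal gives `W₁ ≤ diam(Ω) · TV` on a bounded space.
-/

lemma abs_sub_le_sub_one_mul {x y c : ℝ} (hx : 0 ≤ x) (hy : 0 ≤ y) (hxy : x ≤ c * y)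
    (hyx : y ≤ c * x) : |x - y| ≤ (c - 1) * y := by
  rw [abs_le]
  constructor <;> nlinarith [sq_nonneg (c - 1), mul_nonneg hx hy]

lemma exp_sub_one_le_mul_exp (x : ℝ) : Real.exp x - 1 ≤ x * Real.exp x := by
  have h := mul_le_mul_of_nonneg_right (Real.one_sub_le_exp_neg x) (Real.exp_pos x).le
  rw [← Real.exp_add, neg_add_cancel, Real.exp_zero] at h
  linarith

lemma le_div_mul_exp_sub_one {K c : ℝ} (hK : 0 ≤ K) (hc : 0 < c) :
    K ≤ K / c * (Real.exp c - 1) := by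
  rw [div_mul_eq_mul_div, le_div_iff₀ hc]
  exact mul_le_mul_of_nonneg_left (by linarith [Real.add_one_le_exp c]) hK

lemma exp_mul_sub_one_div_two_le {c L δ : ℝ} (hc : 0 < c) (hL : 0 ≤ L) (hδ₀ : 0 ≤ δ)
    (hδ₁ : δ ≤ 1) :
    (Real.exp (L * δ) - 1) / 2 ≤ (1 / 2 * L * Real.exp L) / c * (Real.exp c - 1) * δ := by
  have hexp : Real.exp (L * δ) ≤ Real.exp L := Real.exp_le_exp.2 (mul_le_of_le_one_right hL hδ₁)
  calc (Real.exp (L * δ) - 1) / 2 ≤ L * δ * Real.exp (L * δ) / 2 := by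
        gcongr; exact exp_sub_one_le_mul_exp _
    _ ≤ (1 / 2 * L * Real.exp L) * δ := by nlinarith [mul_nonneg hL hδ₀]
    _ ≤ _ := mul_le_mul_of_nonneg_right
        (le_div_mul_exp_sub_one (by positivity) (by positivity)) hδ₀

lemma abs_sum_range_le_mul {a : ℕ → ℝ} {c : ℝ} {k : ℕ} (ha : ∀ j < k, |a j| ≤ c) :
    |∑ j ∈ Finset.range k, a j| ≤ k * c := by
  calc |∑ j ∈ Finset.range k, a j| ≤ ∑ j ∈ Finset.range k, |a j| := Finset.abs_sum_le_sum_abs _ _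
    _ ≤ k * c := by
      simpa using Finset.sum_le_card_nsmul _ _ c fun j hj => ha j (Finset.mem_range.1 hj)

lemma abs_intervalIntegral_sub_mul_le {f : ℝ → ℝ} {a b L : ℝ} (hab : a ≤ b)
    (hfi : IntervalIntegrable f volume a b) (hf : ∀ r ∈ Icc a b, |f r - f a| ≤ L * (r - a)) :
    |(∫ r in a..b, f r) - (b - a) * f a| ≤ L * (b - a) ^ 2 / 2 := by
  have hsub : (∫ r in a..b, f r) - (b - a) * f a = ∫ r in a..b, (f r - f a) := by
    rw [intervalIntegral.integral_sub hfi intervalIntegrable_const,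
      intervalIntegral.integral_const, smul_eq_mul]
  rw [hsub, ← Real.norm_eq_abs]
  have hlin : Continuous fun r => L * (r - a) := by fun_prop
  refine (intervalIntegral.norm_integral_le_of_norm_le hab
    (ae_of_all _ fun r hr => hf r (Ioc_subset_Icc_self hr))
    (hlin.intervalIntegrable _ _)).trans_eq ?_
  simp [integral_id, intervalIntegral.integral_const_mul]
  ring

lemma natCast_mul_one_div_le {k N : ℕ} (hk : k ≤ N) : (k : ℝ) * (1 / N) ≤ 1 := by
  rw [mul_one_div]
  exact div_le_one_of_le₀ (by exact_mod_cast hk) (Nat.cast_nonneg N)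

lemma Icc_natCast_div_subset {j N : ℕ} (hj : j < N) :
    Icc ((j : ℝ) / N) (((j : ℝ) + 1) / N) ⊆ Icc 0 1 :=
  Icc_subset_Icc (by positivity) (div_le_one_of_le₀ (by exact_mod_cast hj) (Nat.cast_nonneg N))

lemma natCast_div_le_succ_div (j N : ℕ) : (j : ℝ) / N ≤ ((j : ℝ) + 1) / N :=
  div_le_div_of_nonneg_right (by linarith) (Nat.cast_nonneg N)

lemma uIoc_natCast_div_subset {j N : ℕ} (hj : j < N) :
    uIoc ((j : ℝ) / N) (((j : ℝ) + 1) / N) ⊆ Icc 0 1 := by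
  rw [uIoc_of_le (natCast_div_le_succ_div j N)]
  exact Ioc_subset_Icc_self.trans (Icc_natCast_div_subset hj)

lemma dist_le_diam_univ {Ω : Type*} [PseudoMetricSpace Ω] [BoundedSpace Ω] (x y : Ω) :
    dist x y ≤ diam (univ : Set Ω) :=
  dist_le_diam_of_mem (Bornology.IsBounded.all _) trivial trivial

section Wasserstein

variable {Ω : Type*} [MeasurableSpace Ω]

lemma withDensity_ofReal_apply_univ {μ : Measure Ω} {f : Ω → ℝ} (hf₀ : 0 ≤ f)
    (hfi : Integrable f μ) :
    (μ.withDensity fun ω => ENNReal.ofReal (f ω)) univ = ENNReal.ofReal (∫ ω, f ω ∂μ) := by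
  rw [withDensity_apply _ MeasurableSet.univ, setLIntegral_univ,
    ofReal_integral_eq_lintegral_ofReal hfi (ae_of_all _ hf₀)]

lemma withDensity_ofReal_eq_add {μ : Measure Ω} {f m : Ω → ℝ} (hm : Measurable m)
    (hm₀ : 0 ≤ m) (hmf : m ≤ f) :
    (μ.withDensity fun ω => ENNReal.ofReal (f ω)) = (μ.withDensity fun ω => ENNReal.ofReal (m ω))
      + μ.withDensity fun ω => ENNReal.ofReal (f ω - m ω) := by
  rw [← withDensity_add_left hm.ennreal_ofReal]
  congr 1 with ω
  rw [Pi.add_apply, ← ENNReal.ofReal_add (hm₀ ω) (sub_nonneg.2 (hmf ω)), add_sub_cancel]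


lemma map_fst_map_diag (μ : Measure Ω) : (μ.map Function.diag).map Prod.fst = μ := by
  rw [Measure.map_map measurable_fst measurable_diag]
  exact Measure.map_id

lemma map_snd_map_diag (μ : Measure Ω) : (μ.map Function.diag).map Prod.snd = μ := by
  rw [Measure.map_map measurable_snd measurable_diag]
  exact Measure.map_id

variable [PseudoMetricSpace Ω]

lemma W1_le_integral_dist {P Q : Measure Ω} (γ : Measure (Ω × Ω))
    (h₁ : γ.map Prod.fst = P) (h₂ : γ.map Prod.snd = Q) :
    W1 P Q ≤ ∫ p, dist p.1 p.2 ∂γ :=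
  csInf_le ⟨0, by rintro c ⟨γ', -, -, rfl⟩; exact integral_nonneg fun p => dist_nonneg⟩
    ⟨γ, h₁, h₂, rfl⟩

variable [BorelSpace Ω] [SecondCountableTopology Ω]

lemma integral_dist_map_diag (μ : Measure Ω) :
    ∫ p, dist p.1 p.2 ∂(μ.map Function.diag) = 0 := by
  rw [integral_map measurable_diag.aemeasurable
    (continuous_fst.dist continuous_snd).aestronglyMeasurable]
  simp

variable [BoundedSpace Ω]

lemma integrable_dist (γ : Measure (Ω × Ω)) [IsFiniteMeasure γ] :
    Integrable (fun p => dist p.1 p.2) γ :=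
  .of_bound (continuous_fst.dist continuous_snd).aestronglyMeasurable _
    (ae_of_all _ fun p => by
      simpa [abs_of_nonneg dist_nonneg] using dist_le_diam_univ p.1 p.2)

lemma integral_dist_le_diam_mul (γ : Measure (Ω × Ω)) [IsFiniteMeasure γ] :
    ∫ p, dist p.1 p.2 ∂γ ≤ diam (univ : Set Ω) * γ.real univ := by
  calc ∫ p, dist p.1 p.2 ∂γ ≤ ∫ _, diam (univ : Set Ω) ∂γ :=
        integral_mono (integrable_dist γ) (integrable_const _) fun p => dist_le_diam_univ _ _
    _ = diam (univ : Set Ω) * γ.real univ := by rw [integral_const, smul_eq_mul, mul_comm]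

lemma W1_add_le (M N₁ N₂ : Measure Ω) [IsFiniteMeasure M] [IsFiniteMeasure N₁]
    [IsFiniteMeasure N₂] (h : N₁ univ = N₂ univ) :
    W1 (M + N₁) (M + N₂) ≤ diam (univ : Set Ω) * N₁.real univ := by
  rcases eq_or_ne (N₁ univ) 0 with h₀ | h₀
  · rw [Measure.measure_univ_eq_zero.1 h₀, Measure.measure_univ_eq_zero.1 (h.symm.trans h₀),
      add_zero]
    calc W1 M M ≤ ∫ p, dist p.1 p.2 ∂(M.map Function.diag) :=
          W1_le_integral_dist _ (map_fst_map_diag M) (map_snd_map_diag M)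
      _ = diam (univ : Set Ω) * (0 : Measure Ω).real univ := by
          rw [integral_dist_map_diag]; simp
  set c := N₁ univ
  have hc : c ≠ ⊤ := measure_ne_top _ _
  have h₁ : (M.map Function.diag + c⁻¹ • N₁.prod N₂).map Prod.fst = M + N₁ := by
    rw [Measure.map_add _ _ measurable_fst, Measure.map_smul, map_fst_map_diag,
      Measure.map_fst_prod, ← h, smul_smul, ENNReal.inv_mul_cancel h₀ hc, one_smul]
  have h₂ : (M.map Function.diag + c⁻¹ • N₁.prod N₂).map Prod.snd = M + N₂ := by
    rw [Measure.map_add _ _ measurable_snd, Measure.map_smul, map_snd_map_diag,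
      Measure.map_snd_prod, smul_smul, ENNReal.inv_mul_cancel h₀ hc, one_smul]
  have := (N₁.prod N₂).smul_finite (ENNReal.inv_ne_top.2 h₀)
  calc W1 (M + N₁) (M + N₂)
      ≤ ∫ p, dist p.1 p.2 ∂(M.map Function.diag + c⁻¹ • N₁.prod N₂) :=
        W1_le_integral_dist _ h₁ h₂
    _ = c⁻¹.toReal * ∫ p, dist p.1 p.2 ∂(N₁.prod N₂) := by
        rw [integral_add_measure (integrable_dist _) (integrable_dist _),
          integral_dist_map_diag, integral_smul_measure, zero_add, smul_eq_mul]
    _ ≤ c⁻¹.toReal * (diam (univ : Set Ω) * (N₁.prod N₂).real univ) := by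
        gcongr; exact integral_dist_le_diam_mul _
    _ = diam (univ : Set Ω) * N₁.real univ := by
        rw [← univ_prod_univ, measureReal_prod_prod, measureReal_def, measureReal_def,
          ← h, ENNReal.toReal_inv]
        field_simp [ENNReal.toReal_ne_zero.2 ⟨h₀, hc⟩]

lemma W1_withDensity_le {μ : Measure Ω} {f g : Ω → ℝ} (hf : Measurable f) (hg : Measurable g)
    (hf₀ : 0 ≤ f) (hg₀ : 0 ≤ g) (hfi : Integrable f μ) (hgi : Integrable g μ)
    (hfg : ∫ ω, f ω ∂μ = ∫ ω, g ω ∂μ) :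
    W1 (μ.withDensity fun ω => ENNReal.ofReal (f ω))
        (μ.withDensity fun ω => ENNReal.ofReal (g ω))
      ≤ diam (univ : Set Ω) * (1 / 2 * ∫ ω, |f ω - g ω| ∂μ) := by
  set m := fun ω => min (f ω) (g ω)
  have hm₀ : 0 ≤ m := fun ω => le_min (hf₀ ω) (hg₀ ω)
  have hmi : Integrable m μ := hfi.inf hgi
  have hu₀ : 0 ≤ fun ω => f ω - m ω := fun ω => sub_nonneg.2 (min_le_left _ _)
  have hv₀ : 0 ≤ fun ω => g ω - m ω := fun ω => sub_nonneg.2 (min_le_right _ _)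
  have hui : Integrable (fun ω => f ω - m ω) μ := hfi.sub hmi
  have hvi : Integrable (fun ω => g ω - m ω) μ := hgi.sub hmi
  have huv : ∫ ω, f ω - m ω ∂μ = ∫ ω, g ω - m ω ∂μ := by
    rw [integral_sub hfi hmi, integral_sub hgi hmi, hfg]
  have hu_half : ∫ ω, f ω - m ω ∂μ = 1 / 2 * ∫ ω, |f ω - g ω| ∂μ := by
    have habs : ∀ ω, |f ω - g ω| = (f ω - m ω) + (g ω - m ω) := fun ω => by
      rcases le_total (f ω) (g ω) with h | h
      · simp [m, min_eq_left h, abs_of_nonpos (sub_nonpos.2 h)]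
      · simp [m, min_eq_right h, abs_of_nonneg (sub_nonneg.2 h)]
    rw [integral_congr_ae (ae_of_all _ habs), integral_add hui hvi, ← huv]
    ring
  have := isFiniteMeasure_withDensity_ofReal hmi.2
  have := isFiniteMeasure_withDensity_ofReal hui.2
  have := isFiniteMeasure_withDensity_ofReal hvi.2
  rw [withDensity_ofReal_eq_add (hf.min hg) hm₀ (fun ω => min_le_left _ _),
    withDensity_ofReal_eq_add (f := g) (hf.min hg) hm₀ (fun ω => min_le_right _ _)]
  refine (W1_add_le _ _ _ ?_).trans_eq ?_
  · rw [withDensity_ofReal_apply_univ hu₀ hui,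
      withDensity_ofReal_apply_univ hv₀ hvi, huv]
  · rw [measureReal_def, withDensity_ofReal_apply_univ hu₀ hui,
      ENNReal.toReal_ofReal (integral_nonneg hu₀), hu_half]

lemma W1_le_diam_mul_tvDist (P Q : Measure Ω) [IsFiniteMeasure P] [IsFiniteMeasure Q]
    (h : P univ = Q univ) :
    W1 P Q ≤ diam (univ : Set Ω) * tvDist P Q := by
  have hdens : ∀ R : Measure Ω, [IsFiniteMeasure R] → R ≪ P + Q →
      ((P + Q).withDensity fun ω => ENNReal.ofReal (R.rnDeriv (P + Q) ω).toReal) = R :=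
    fun R _ hR => by
      refine (withDensity_congr_ae ?_).trans (Measure.withDensity_rnDeriv_eq R (P + Q) hR)
      filter_upwards [Measure.rnDeriv_lt_top R (P + Q)] with ω hω
      exact ENNReal.ofReal_toReal hω.ne
  have hP : P ≪ P + Q := Measure.absolutelyContinuous_of_le (Measure.le_add_right le_rfl)
  have hQ : Q ≪ P + Q := Measure.absolutelyContinuous_of_le (Measure.le_add_left le_rfl)
  have hW := W1_withDensity_le (f := fun ω => (P.rnDeriv (P + Q) ω).toReal)
    (g := fun ω => (Q.rnDeriv (P + Q) ω).toReal) (Measure.measurable_rnDeriv _ _).ennreal_toReal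
    (Measure.measurable_rnDeriv _ _).ennreal_toReal (fun _ => ENNReal.toReal_nonneg)
    (fun _ => ENNReal.toReal_nonneg) Measure.integrable_toReal_rnDeriv
    Measure.integrable_toReal_rnDeriv
    (by rw [Measure.integral_toReal_rnDeriv hP, Measure.integral_toReal_rnDeriv hQ,
      measureReal_def, measureReal_def, h])
  rwa [hdens P hP, hdens Q hQ] at hW

end Wasserstein

section TotalVariation
variable {Ω : Type*} [MeasurableSpace Ω]

lemma tvDist_eq_integral_rnDeriv {P Q μ : Measure Ω} [SigmaFinite P] [SigmaFinite Q]
    [SigmaFinite μ] (hP : P ≪ μ) (hQ : Q ≪ μ) :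
    tvDist P Q = 1 / 2 * ∫ ω, |(P.rnDeriv μ ω).toReal - (Q.rnDeriv μ ω).toReal| ∂μ := by
  rw [tvDist, ← integral_toReal_rnDeriv_mul (hP.add_left hQ)]
  congr 1
  refine integral_congr_ae ?_
  filter_upwards [Measure.rnDeriv_mul_rnDeriv (κ := μ)
      (Measure.absolutelyContinuous_of_le (Measure.le_add_right le_rfl) : P ≪ P + Q),
    Measure.rnDeriv_mul_rnDeriv (κ := μ)
      (Measure.absolutelyContinuous_of_le (Measure.le_add_left le_rfl) : Q ≪ P + Q)]
    with ω hPω hQω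
  rw [← hPω, ← hQω, Pi.mul_apply, Pi.mul_apply, ENNReal.toReal_mul, ENNReal.toReal_mul,
    ← sub_mul, abs_mul, abs_of_nonneg ENNReal.toReal_nonneg, mul_comm]

lemma tvDist_withDensity {μ : Measure Ω} [SigmaFinite μ] {f g : Ω → ℝ} (hf : Measurable f)
    (hg : Measurable g) (hf₀ : 0 ≤ f) (hg₀ : 0 ≤ g) :
    tvDist (μ.withDensity fun ω => ENNReal.ofReal (f ω))
        (μ.withDensity fun ω => ENNReal.ofReal (g ω))
      = 1 / 2 * ∫ ω, |f ω - g ω| ∂μ := by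
  rw [tvDist_eq_integral_rnDeriv (withDensity_absolutelyContinuous _ _)
    (withDensity_absolutelyContinuous _ _)]
  congr 1
  refine integral_congr_ae ?_
  filter_upwards [Measure.rnDeriv_withDensity μ hf.ennreal_ofReal,
    Measure.rnDeriv_withDensity μ hg.ennreal_ofReal] with ω hfω hgω
  rw [hfω, hgω, ENNReal.toReal_ofReal (hf₀ ω), ENNReal.toReal_ofReal (hg₀ ω)]

lemma gibbsTilt_eq_tilted (μ : Measure Ω) (G : Ω → ℝ) : gibbsTilt μ G = μ.tilted G := rfl

lemma integrable_exp_of_le {μ : Measure Ω} [IsFiniteMeasure μ] {G : Ω → ℝ} (hG : Measurable G)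
    {C : ℝ} (hGC : ∀ ω, G ω ≤ C) : Integrable (fun ω => Real.exp (G ω)) μ :=
  .of_bound hG.exp.aestronglyMeasurable (Real.exp C) (ae_of_all _ fun ω => by
    rw [Real.norm_of_nonneg (Real.exp_pos _).le]
    exact Real.exp_le_exp.2 (hGC ω))

/-- One factor `e^ε` comes from the potentials, the other from the normalising constants. -/
lemma exp_div_integral_exp_le {μ : Measure Ω} [NeZero μ] {G H : Ω → ℝ} {ε : ℝ}
    (hGi : Integrable (fun ω => Real.exp (G ω)) μ) (hHi : Integrable (fun ω => Real.exp (H ω)) μ)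
    (hGH : ∀ ω, |G ω - H ω| ≤ ε) (ω : Ω) :
    Real.exp (G ω) / ∫ ω', Real.exp (G ω') ∂μ
      ≤ Real.exp (2 * ε) * (Real.exp (H ω) / ∫ ω', Real.exp (H ω') ∂μ) := by
  have hexp : ∀ {G H : Ω → ℝ}, (∀ ω, |G ω - H ω| ≤ ε) → ∀ ω,
      Real.exp (G ω) ≤ Real.exp ε * Real.exp (H ω) := fun h ω => by
    rw [← Real.exp_add]
    exact Real.exp_le_exp.2 (by linarith [(abs_le.1 (h ω)).2])
  have hZ : ∫ ω', Real.exp (H ω') ∂μ ≤ Real.exp ε * ∫ ω', Real.exp (G ω') ∂μ := by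
    rw [← integral_const_mul]
    exact integral_mono hHi (hGi.const_mul _) (hexp fun ω => by rw [abs_sub_comm]; exact hGH ω)
  rw [mul_div_assoc', div_le_div_iff₀ (integral_exp_pos hGi) (integral_exp_pos hHi)]
  calc Real.exp (G ω) * ∫ ω', Real.exp (H ω') ∂μ
      ≤ (Real.exp ε * Real.exp (H ω)) * (Real.exp ε * ∫ ω', Real.exp (G ω') ∂μ) :=
        mul_le_mul (hexp hGH ω) hZ (integral_exp_pos hHi).le (by positivity)
    _ = Real.exp (2 * ε) * Real.exp (H ω) * ∫ ω', Real.exp (G ω') ∂μ := by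
        rw [two_mul, Real.exp_add]; ring

lemma tvDist_tilted_le {μ : Measure Ω} [SigmaFinite μ] [NeZero μ] {G H : Ω → ℝ} {ε : ℝ}
    (hG : Measurable G) (hH : Measurable H) (hGi : Integrable (fun ω => Real.exp (G ω)) μ)
    (hHi : Integrable (fun ω => Real.exp (H ω)) μ) (hGH : ∀ ω, |G ω - H ω| ≤ ε) :
    tvDist (μ.tilted G) (μ.tilted H) ≤ (Real.exp (2 * ε) - 1) / 2 := by
  set y := fun ω => Real.exp (H ω) / ∫ ω', Real.exp (H ω') ∂μ
  have hy : ∫ ω, y ω ∂μ = 1 := by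
    rw [integral_div, div_self (integral_exp_pos hHi).ne']
  rw [Measure.tilted, Measure.tilted, tvDist_withDensity (hG.exp.div_const _)
    (hH.exp.div_const _) (fun _ => by positivity) (fun _ => by positivity)]
  calc 1 / 2 * ∫ ω, |Real.exp (G ω) / (∫ ω', Real.exp (G ω') ∂μ) - y ω| ∂μ
      ≤ 1 / 2 * ∫ ω, (Real.exp (2 * ε) - 1) * y ω ∂μ := by
        gcongr
        · exact ((hGi.div_const _).sub (hHi.div_const _)).abs
        · exact (hHi.div_const _).const_mul _
        · exact fun ω => abs_sub_le_sub_one_mul (by positivity) (by positivity)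
            (exp_div_integral_exp_le hGi hHi hGH _)
            (exp_div_integral_exp_le hHi hGi (fun ω => by rw [abs_sub_comm]; exact hGH ω) _)
    _ = (Real.exp (2 * ε) - 1) / 2 := by rw [integral_const_mul, hy]; ring

lemma eq_tilted_sum_range {μ : Measure Ω} [IsProbabilityMeasure μ] {ν : ℕ → Measure Ω}
    {G : ℕ → Ω → ℝ} {N : ℕ} (h₀ : ν 0 = μ) (hstep : ∀ k < N, ν (k + 1) = (ν k).tilted (G k))
    (hint : ∀ k < N, Integrable (fun ω => Real.exp (∑ j ∈ Finset.range k, G j ω)) μ) :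
    ∀ k ≤ N, ν k = μ.tilted fun ω => ∑ j ∈ Finset.range k, G j ω
  | 0, _ => by simpa using h₀
  | k + 1, hk => by
    rw [hstep k hk, eq_tilted_sum_range h₀ hstep hint k (Nat.le_of_succ_le hk),
      tilted_tilted (hint k hk)]
    congr 1 with ω
    rw [Finset.sum_range_succ, Pi.add_apply]

end TotalVariation

section Discretisation

variable {Ω : Type*} {F : ℝ → Ω → ℝ} {N : ℕ} {C L : ℝ}

noncomputable def exactPotential (F : ℝ → Ω → ℝ) (N k : ℕ) (ω : Ω) : ℝ :=
  ∑ j ∈ Finset.range k, ∫ r in (j : ℝ) / N..((j : ℝ) + 1) / N, F r ω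

noncomputable def eulerPotential (F : ℝ → Ω → ℝ) (N k : ℕ) (ω : Ω) : ℝ :=
  ∑ j ∈ Finset.range k, 1 / (N : ℝ) * F ((j : ℝ) / N) ω

lemma abs_intervalIntegral_natCast_div_le (hFb : ∀ s ∈ Icc (0 : ℝ) 1, ∀ ω, |F s ω| ≤ C)
    {j : ℕ} (hj : j < N) (ω : Ω) :
    |∫ r in (j : ℝ) / N..((j : ℝ) + 1) / N, F r ω| ≤ C * (1 / N) := by
  have h := intervalIntegral.norm_integral_le_of_norm_le_const fun r hr =>
    (Real.norm_eq_abs _).trans_le (hFb r (uIoc_natCast_div_subset hj hr) ω)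
  rwa [Real.norm_eq_abs, div_sub_div_same, add_sub_cancel_left,
    abs_of_nonneg (a := 1 / (N : ℝ)) (by positivity)] at h

lemma abs_exactPotential_le (hFb : ∀ s ∈ Icc (0 : ℝ) 1, ∀ ω, |F s ω| ≤ C) {k : ℕ} (hk : k ≤ N)
    (ω : Ω) : |exactPotential F N k ω| ≤ C := by
  have hC : 0 ≤ C := (abs_nonneg _).trans (hFb 0 ⟨le_rfl, zero_le_one⟩ ω)
  calc |exactPotential F N k ω| ≤ k * (C * (1 / N)) := abs_sum_range_le_mul fun j hj =>
        abs_intervalIntegral_natCast_div_le hFb (hj.trans_le hk) ω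
    _ ≤ C := by rw [mul_left_comm]; exact mul_le_of_le_one_right hC (natCast_mul_one_div_le hk)

lemma abs_eulerPotential_le (hFb : ∀ s ∈ Icc (0 : ℝ) 1, ∀ ω, |F s ω| ≤ C) {k : ℕ} (hk : k ≤ N)
    (ω : Ω) : |eulerPotential F N k ω| ≤ C := by
  have hC : 0 ≤ C := (abs_nonneg _).trans (hFb 0 ⟨le_rfl, zero_le_one⟩ ω)
  calc |eulerPotential F N k ω| ≤ k * (C * (1 / N)) := abs_sum_range_le_mul fun j hj => by
        rw [abs_mul, abs_of_nonneg (by positivity), mul_comm]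
        gcongr
        exact hFb _ (Icc_natCast_div_subset (hj.trans_le hk)
          ⟨le_rfl, natCast_div_le_succ_div j N⟩) ω
    _ ≤ C := by rw [mul_left_comm]; exact mul_le_of_le_one_right hC (natCast_mul_one_div_le hk)

variable [MeasurableSpace Ω]

lemma measurable_intervalIntegral_of_uncurry (hF : Measurable (Function.uncurry F)) (a b : ℝ) :
    Measurable fun ω => ∫ r in a..b, F r ω := by
  have h : ∀ s : Set ℝ, Measurable fun ω => ∫ r in s, F r ω := fun s =>
    (hF.comp measurable_swap).stronglyMeasurable.integral_prod_right'.measurable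
  exact (h _).sub (h _)

lemma measurable_exactPotential (hF : Measurable (Function.uncurry F)) (N k : ℕ) :
    Measurable (exactPotential F N k) :=
  Finset.measurable_sum _ fun _ _ => measurable_intervalIntegral_of_uncurry hF _ _

lemma measurable_eulerPotential (hF : Measurable (Function.uncurry F)) (N k : ℕ) :
    Measurable (eulerPotential F N k) :=
  Finset.measurable_sum _ fun _ _ =>
    (hF.comp (measurable_const.prodMk measurable_id)).const_mul _

lemma intervalIntegrable_natCast_div (hF : Measurable (Function.uncurry F))
    (hFb : ∀ s ∈ Icc (0 : ℝ) 1, ∀ ω, |F s ω| ≤ C) {j : ℕ} (hj : j < N) (ω : Ω) :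
    IntervalIntegrable (fun r => F r ω) volume ((j : ℝ) / N) (((j : ℝ) + 1) / N) :=
  intervalIntegrable_const.mono_fun'
    (hF.comp (measurable_id.prodMk measurable_const)).aestronglyMeasurable
    ((ae_restrict_iff' measurableSet_uIoc).2 (ae_of_all _ fun r hr =>
      (Real.norm_eq_abs _).trans_le (hFb r (uIoc_natCast_div_subset hj hr) ω)))

lemma abs_exactPotential_sub_eulerPotential_le (hF : Measurable (Function.uncurry F))
    (hFb : ∀ s ∈ Icc (0 : ℝ) 1, ∀ ω, |F s ω| ≤ C)
    (hFlip : ∀ r ∈ Icc (0 : ℝ) 1, ∀ s ∈ Icc (0 : ℝ) 1, ∀ ω, |F r ω - F s ω| ≤ L * |r - s|)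
    {k : ℕ} (hk : k ≤ N) (ω : Ω) :
    |exactPotential F N k ω - eulerPotential F N k ω| ≤ L * (1 / N) / 2 := by
  have hL : 0 ≤ L := by
    simpa using (abs_nonneg _).trans (hFlip 0 ⟨le_rfl, zero_le_one⟩ 1 ⟨zero_le_one, le_rfl⟩ ω)
  rw [exactPotential, eulerPotential, ← Finset.sum_sub_distrib]
  calc _ ≤ k * (L * (1 / N) / 2 * (1 / N)) := abs_sum_range_le_mul fun j hj => by
        have hsub := Icc_natCast_div_subset (hj.trans_le hk)
        have h := abs_intervalIntegral_sub_mul_le (natCast_div_le_succ_div j N)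
          (intervalIntegrable_natCast_div hF hFb (hj.trans_le hk) ω) fun r hr => by
            simpa [abs_of_nonneg (sub_nonneg.2 hr.1)] using
              hFlip r (hsub hr) _ (hsub ⟨le_rfl, natCast_div_le_succ_div j N⟩) ω
        rw [div_sub_div_same, add_sub_cancel_left] at h
        linarith
    _ ≤ L * (1 / N) / 2 := by
        rw [mul_left_comm]
        exact mul_le_of_le_one_right (by positivity) (natCast_mul_one_div_le hk)

variable {μ : Measure Ω}

lemma integrable_exp_exactPotential [IsFiniteMeasure μ] (hF : Measurable (Function.uncurry F))
    (hFb : ∀ s ∈ Icc (0 : ℝ) 1, ∀ ω, |F s ω| ≤ C) {k : ℕ} (hk : k ≤ N) :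
    Integrable (fun ω => Real.exp (exactPotential F N k ω)) μ :=
  integrable_exp_of_le (measurable_exactPotential hF N k) fun ω =>
    (le_abs_self _).trans (abs_exactPotential_le hFb hk ω)

lemma integrable_exp_eulerPotential [IsFiniteMeasure μ] (hF : Measurable (Function.uncurry F))
    (hFb : ∀ s ∈ Icc (0 : ℝ) 1, ∀ ω, |F s ω| ≤ C) {k : ℕ} (hk : k ≤ N) :
    Integrable (fun ω => Real.exp (eulerPotential F N k ω)) μ :=
  integrable_exp_of_le (measurable_eulerPotential hF N k) fun ω =>
    (le_abs_self _).trans (abs_eulerPotential_le hFb hk ω)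

lemma tvDist_tilted_exactPotential_eulerPotential_le [IsProbabilityMeasure μ]
    (hF : Measurable (Function.uncurry F)) (hFb : ∀ s ∈ Icc (0 : ℝ) 1, ∀ ω, |F s ω| ≤ C)
    (hFlip : ∀ r ∈ Icc (0 : ℝ) 1, ∀ s ∈ Icc (0 : ℝ) 1, ∀ ω, |F r ω - F s ω| ≤ L * |r - s|)
    {k : ℕ} (hk : k ≤ N) :
    tvDist (μ.tilted (exactPotential F N k)) (μ.tilted (eulerPotential F N k))
      ≤ (1 / 2 * L * Real.exp L) / (4 * C * Real.exp (2 * C))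
        * (Real.exp (4 * C * Real.exp (2 * C)) - 1) * (1 / (N : ℝ)) := by
  obtain ⟨ω₀⟩ := nonempty_of_isProbabilityMeasure μ
  have hC : 0 ≤ C := (abs_nonneg _).trans (hFb 0 ⟨le_rfl, zero_le_one⟩ ω₀)
  have hL : 0 ≤ L := by
    simpa using (abs_nonneg _).trans (hFlip 0 ⟨le_rfl, zero_le_one⟩ 1 ⟨zero_le_one, le_rfl⟩ ω₀)
  have htilt : ∀ {ε : ℝ}, (∀ ω, |exactPotential F N k ω - eulerPotential F N k ω| ≤ ε) →
      tvDist (μ.tilted (exactPotential F N k)) (μ.tilted (eulerPotential F N k))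
        ≤ (Real.exp (2 * ε) - 1) / 2 :=
    tvDist_tilted_le (measurable_exactPotential hF N k) (measurable_eulerPotential hF N k)
      (integrable_exp_exactPotential hF hFb hk) (integrable_exp_eulerPotential hF hFb hk)
  rcases hC.eq_or_lt with hC₀ | hC₀
  · -- the right-hand side is `0` (division by `C = 0`), and so are both potentials
    refine (htilt fun ω => (abs_sub _ _).trans
      (add_le_add (abs_exactPotential_le hFb hk ω) (abs_eulerPotential_le hFb hk ω))).trans_eq ?_
    simp [← hC₀]
  · calc _ ≤ (Real.exp (2 * (L * (1 / N) / 2)) - 1) / 2 :=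
          htilt (abs_exactPotential_sub_eulerPotential_le hF hFb hFlip hk)
      _ = (Real.exp (L * (1 / N)) - 1) / 2 := by ring_nf
      _ ≤ _ := exp_mul_sub_one_div_two_le (by positivity) hL (by positivity)
          (by simpa using Nat.cast_inv_le_one N)

end Discretisation

theorem global_tv_w1_convergence_general
    {Ω : Type*} [MetricSpace Ω] [MeasurableSpace Ω] [BorelSpace Ω]
    (π₀ : Measure Ω) [IsProbabilityMeasure π₀]
    (F : ℝ → Ω → ℝ) (hFm : Measurable (Function.uncurry F))
    (Cab Lab : ℝ)
    (hFb : ∀ s ∈ Set.Icc (0:ℝ) 1, ∀ ω, |F s ω| ≤ Cab)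
    (hFlip : ∀ r ∈ Set.Icc (0:ℝ) 1, ∀ s ∈ Set.Icc (0:ℝ) 1, ∀ ω,
      |F r ω - F s ω| ≤ Lab * |r - s|)
    (N : ℕ)
    (πseq πseq' : ℕ → Measure Ω)
    (hπ0 : πseq 0 = π₀) (hπ'0 : πseq' 0 = π₀)
    (hπ : ∀ k < N, πseq (k + 1)
      = gibbsTilt (πseq k)
          fun ω => ∫ r in ((k : ℝ) / N)..(((k : ℝ) + 1) / N), F r ω)
    (hπ' : ∀ k < N, πseq' (k + 1)
      = gibbsTilt (πseq' k) fun ω => (1 / (N : ℝ)) * F ((k : ℝ) / N) ω) :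
    (∀ k ≤ N, tvDist (πseq k) (πseq' k)
      ≤ ((1 / 2) * Lab * Real.exp Lab) / (4 * Cab * Real.exp (2 * Cab))
          * (Real.exp (4 * Cab * Real.exp (2 * Cab)) - 1) * (1 / (N : ℝ)))
    ∧ (CompactSpace Ω → ∀ k ≤ N,
      W1 (πseq k) (πseq' k)
        ≤ Metric.diam (Set.univ : Set Ω)
          * (((1 / 2) * Lab * Real.exp Lab) / (4 * Cab * Real.exp (2 * Cab))
              * (Real.exp (4 * Cab * Real.exp (2 * Cab)) - 1)
              * (1 / (N : ℝ)))) := by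
  have hexact : ∀ k ≤ N, πseq k = π₀.tilted (exactPotential F N k) :=
    eq_tilted_sum_range hπ0 (fun k hk => (hπ k hk).trans (gibbsTilt_eq_tilted _ _))
      fun k hk => integrable_exp_exactPotential hFm hFb hk.le
  have heuler : ∀ k ≤ N, πseq' k = π₀.tilted (eulerPotential F N k) :=
    eq_tilted_sum_range hπ'0 (fun k hk => (hπ' k hk).trans (gibbsTilt_eq_tilted _ _))
      fun k hk => integrable_exp_eulerPotential hFm hFb hk.le
  have htv := fun k (hk : k ≤ N) => (congrArg₂ tvDist (hexact k hk) (heuler k hk)).trans_le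
    (tvDist_tilted_exactPotential_eulerPotential_le hFm hFb hFlip hk)
  refine ⟨htv, fun _ k hk => ?_⟩
  have := isProbabilityMeasure_tilted (integrable_exp_exactPotential (μ := π₀) hFm hFb hk)
  have := isProbabilityMeasure_tilted (integrable_exp_eulerPotential (μ := π₀) hFm hFb hk)
  calc W1 (πseq k) (πseq' k) ≤ diam (univ : Set Ω) * tvDist (πseq k) (πseq' k) := by
        rw [hexact k hk, heuler k hk]
        exact W1_le_diam_mul_tvDist _ _ (by simp)
    _ ≤ _ := mul_le_mul_of_nonneg_left (htv k hk) diam_nonneg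

/-- Global TV & W₁ convergence (Theorem 5.1): the exact tilted sequence
`π_{t_{k+1}} = GibbsTilt(π_{t_k}, ∫_{t_k}^{t_{k+1}} F_r dr)` and the frozen
Euler sequence `π̃_{t_{k+1}} = GibbsTilt(π̃_{t_k}, δ F_{t_k})`, both started
from `π₀`, with `F` uniformly bounded by `C_ab` and time-Lipschitz with
constant `L_ab`, satisfy `‖π_{t_k} − π̃_{t_k}‖_TV ≤ C_global δ` for all
`k ≤ N`, where `C_global = (C₁/C₂)(e^{C₂} − 1)`, `C₁ = (1/2)L_ab e^{L_ab}`,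
`C₂ = 4 C_ab e^{2C_ab}`; and if `Ω` is compact, also
`W₁(π_{t_k}, π̃_{t_k}) ≤ diam(Ω) · C_global δ`. -/
theorem global_tv_w1_convergence
    {Ω : Type*} [MetricSpace Ω] [MeasurableSpace Ω] [BorelSpace Ω]
    (π₀ : Measure Ω) [IsProbabilityMeasure π₀]
    (F : ℝ → Ω → ℝ) (hFm : Measurable (Function.uncurry F))
    (Cab Lab : ℝ)
    (hFb : ∀ s ∈ Set.Icc (0:ℝ) 1, ∀ ω, |F s ω| ≤ Cab)
    (hFlip : ∀ r ∈ Set.Icc (0:ℝ) 1, ∀ s ∈ Set.Icc (0:ℝ) 1, ∀ ω,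
      |F r ω - F s ω| ≤ Lab * |r - s|)
    (N : ℕ) (hN : 0 < N)
    (πseq πseq' : ℕ → Measure Ω)
    (hπ0 : πseq 0 = π₀) (hπ'0 : πseq' 0 = π₀)
    (hπ : ∀ k < N, πseq (k + 1)
      = gibbsTilt (πseq k)
          fun ω => ∫ r in ((k : ℝ) / N)..(((k : ℝ) + 1) / N), F r ω)
    (hπ' : ∀ k < N, πseq' (k + 1)
      = gibbsTilt (πseq' k) fun ω => (1 / (N : ℝ)) * F ((k : ℝ) / N) ω) :
    (∀ k ≤ N, tvDist (πseq k) (πseq' k)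
      ≤ ((1 / 2) * Lab * Real.exp Lab) / (4 * Cab * Real.exp (2 * Cab))
          * (Real.exp (4 * Cab * Real.exp (2 * Cab)) - 1) * (1 / (N : ℝ)))
    ∧ (CompactSpace Ω → ∀ k ≤ N,
      W1 (πseq k) (πseq' k)
        ≤ Metric.diam (Set.univ : Set Ω)
          * (((1 / 2) * Lab * Real.exp Lab) / (4 * Cab * Real.exp (2 * Cab))
              * (Real.exp (4 * Cab * Real.exp (2 * Cab)) - 1)
              * (1 / (N : ℝ)))) :=
  global_tv_w1_convergence_general π₀ F hFm Cab Lab hFb hFlip N πseq πseq' hπ0 hπ'0 hπ hπ'
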